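/- Conversely, in the series composition of G₁, G₂, G₃ through bridge sets B₁, B₂ as above, any p-linking from S ⊆ V(G₁) \ B₁ to T ⊆ V(G₃) \ B₂ in the composite graph decomposes into a p-linking from S to some B₁' ⊆ B₁ in G₁, a p-linking from B₁' to some B₂' ⊆ B₂ in G₂, and a p-linking from B₂' to T in G₃. -/

import Mathlib

/-- An `r`-linking from `S` to `T`: `r` pairwise vertex-disjoint simple directed paths,
each starting in `S` and ending in `T`. -/
def IsLinking {V : Type*} (E : V → V → Prop) (S T : Set V) (r : ℕ)
    (P : Fin r → List V) : Prop :=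
  (∀ i, (P i) ≠ [] ∧ (P i).Chain' E ∧ (P i).Nodup ∧
    (∃ a ∈ S, (P i).head? = some a) ∧ (∃ b ∈ T, (P i).getLast? = some b)) ∧
  ∀ i j, i ≠ j → ∀ v, v ∈ P i → v ∉ P j

/-!
Along a path of the composite graph the stage never decreases: an edge leaving `V₁ \ V₂` is an
`E₁`-edge, an edge leaving `V₂ \ V₃` is an `E₂`-edge (vertices of `B₁` have no outgoing
`E₁`-edges), and an edge leaving `V₃` is an `E₃`-edge that stays in `V₃`. Cutting every path at
its first vertex in `B₁` and at its first vertex in `B₂` gives the three segments; being sublists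
of the original paths, they inherit simplicity and pairwise disjointness.
-/

namespace List

variable {α : Type*} {R R' : α → α → Prop} {X Y : Set α}

theorem IsChain.imp_of_invariant (hstep : ∀ a ∈ X, ∀ b, R a b → R' a b ∧ b ∈ X)
    {l : List α} {u : α} (hl : l.IsChain R) (hu : l.head? = some u) (huX : u ∈ X) :
    l.IsChain R' := by
  have hmem : ∀ x ∈ l, x ∈ X :=
    hl.induction (· ∈ X) l (fun x y h hx => (hstep x hx y h).2)
      (fun hne => by rw [head?_eq_some_head hne, Option.some.injEq] at hu; exact hu ▸ huX)
  exact hl.imp_of_mem_imp fun a b ha _ h => (hstep a (hmem a ha) b h).1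

theorem IsChain.exists_split_of_exit (hstep : ∀ a ∈ X, ∀ b, R a b → R' a b ∧ (b ∈ X ∨ b ∈ Y)) :
    ∀ {l : List α} {u t : α}, l.IsChain R → l.head? = some u → u ∈ X →
      l.getLast? = some t → t ∉ X → ∃ A b C, l = A ++ b :: C ∧ (A ++ [b]).IsChain R' ∧ b ∈ Y
  | [], _, _, _, hu, _, _, _ => by simp at hu
  | [_], _, _, _, hu, huX, ht, htX => by
    simp only [head?_cons, getLast?_singleton, Option.some.injEq] at hu ht
    subst hu ht
    exact absurd huX htX
  | u :: v :: rest, _, t, hl, hu, huX, ht, htX => by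
    simp only [head?_cons, Option.some.injEq] at hu
    subst hu
    obtain ⟨huv, hl⟩ := isChain_cons_cons.mp hl
    obtain ⟨huv', hv⟩ := hstep _ huX v huv
    by_cases hvX : v ∈ X
    · obtain ⟨A, b, C, hsplit, hA, hb⟩ :=
        exists_split_of_exit hstep hl rfl hvX (by rwa [getLast?_cons_cons] at ht) htX
      have hhead : (A ++ [b]).head? = some v := by
        simpa [head?_append] using (congrArg head? hsplit).symm
      refine ⟨u :: A, b, C, by rw [hsplit, cons_append], ?_, hb⟩
      exact List.isChain_cons.mpr ⟨fun y hy => Option.mem_some_iff.mp (hhead ▸ hy) ▸ huv', hA⟩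
    · exact ⟨[u], v, rest, rfl, by simpa using huv', hv.resolve_left hvX⟩

end List

theorem IsLinking.of_sublist {V : Type*} {E E' : V → V → Prop} {S T S' T' : Set V} {r : ℕ}
    {P Q : Fin r → List V} (hP : IsLinking E S T r P) (hsub : ∀ i, (Q i).Sublist (P i))
    (hchain : ∀ i, (Q i).IsChain E') (hhead : ∀ i, ∃ a ∈ S', (Q i).head? = some a)
    (hlast : ∀ i, ∃ b ∈ T', (Q i).getLast? = some b) : IsLinking E' S' T' r Q := by
  refine ⟨fun i => ⟨?_, hchain i, (hsub i).nodup (hP.1 i).2.2.1, hhead i, hlast i⟩,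
    fun i j hij v hvi hvj => hP.2 i j hij v ((hsub i).subset hvi) ((hsub j).subset hvj)⟩
  obtain ⟨a, -, ha⟩ := hhead i
  exact List.ne_nil_of_mem (List.mem_of_mem_head? ha)

namespace SeriesComposition

variable {V : Type*} {V₁ V₂ V₃ : Set V} {E₁ E₂ E₃ : V → V → Prop}

theorem exists_split₂₃ (hE₁ : ∀ a b, E₁ a b → a ∈ V₁ ∧ b ∈ V₁)
    (hE₂ : ∀ a b, E₂ a b → a ∈ V₂ ∧ b ∈ V₂) (hE₃ : ∀ a b, E₃ a b → a ∈ V₃ ∧ b ∈ V₃)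
    (h13 : Disjoint V₁ V₃)
    (hB₁out : ∀ w ∈ V₁ ∩ V₂, ∀ x, ¬ E₁ w x) (hB₂out : ∀ w ∈ V₂ ∩ V₃, ∀ x, ¬ E₂ w x)
    {l : List V} {u t : V} (hl : l.IsChain fun a b => E₁ a b ∨ E₂ a b ∨ E₃ a b)
    (hu : l.head? = some u) (hu₂ : u ∈ V₂ \ V₃) (ht : l.getLast? = some t) (ht₃ : t ∈ V₃) :
    ∃ (c : V) (L₂ L₃ : List V), c ∈ V₂ ∩ V₃ ∧
      L₂.Sublist l ∧ L₂.IsChain E₂ ∧ L₂.head? = l.head? ∧ L₂.getLast? = some c ∧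
      L₃.Sublist l ∧ L₃.IsChain E₃ ∧ L₃.head? = some c ∧ L₃.getLast? = l.getLast? := by
  have hstep₂ : ∀ a ∈ V₂ \ V₃, ∀ b, (E₁ a b ∨ E₂ a b ∨ E₃ a b) →
      E₂ a b ∧ (b ∈ V₂ \ V₃ ∨ b ∈ V₂ ∩ V₃) := by
    rintro a ⟨ha₂, ha₃⟩ b (h | h | h)
    · exact absurd h (hB₁out a ⟨(hE₁ a b h).1, ha₂⟩ b)
    · have hb₂ := (hE₂ a b h).2
      exact ⟨h, (em (b ∈ V₃)).symm.imp (⟨hb₂, ·⟩) (⟨hb₂, ·⟩)⟩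
    · exact absurd (hE₃ a b h).1 ha₃
  have hstep₃ : ∀ a ∈ V₃, ∀ b, (E₁ a b ∨ E₂ a b ∨ E₃ a b) → E₃ a b ∧ b ∈ V₃ := by
    rintro a ha₃ b (h | h | h)
    · exact absurd ha₃ (h13.notMem_of_mem_left (hE₁ a b h).1)
    · exact absurd h (hB₂out a ⟨(hE₂ a b h).1, ha₃⟩ b)
    · exact ⟨h, (hE₃ a b h).2⟩
  obtain ⟨M, c, D, rfl, hM, hc⟩ :=
    hl.exists_split_of_exit hstep₂ hu hu₂ ht fun h => h.2 ht₃
  exact ⟨c, M ++ [c], c :: D, hc, by simp, hM, by simp [List.head?_append],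
    List.getLast?_concat, List.sublist_append_right M _,
    hl.right_of_append.imp_of_invariant hstep₃ rfl hc.2, rfl, (List.getLast?_append_cons ..).symm⟩

theorem exists_split₁₂₃ (hE₁ : ∀ a b, E₁ a b → a ∈ V₁ ∧ b ∈ V₁)
    (hE₂ : ∀ a b, E₂ a b → a ∈ V₂ ∧ b ∈ V₂) (hE₃ : ∀ a b, E₃ a b → a ∈ V₃ ∧ b ∈ V₃)
    (h13 : Disjoint V₁ V₃)
    (hB₁out : ∀ w ∈ V₁ ∩ V₂, ∀ x, ¬ E₁ w x) (hB₂out : ∀ w ∈ V₂ ∩ V₃, ∀ x, ¬ E₂ w x)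
    {l : List V} {u t : V} (hl : l.IsChain fun a b => E₁ a b ∨ E₂ a b ∨ E₃ a b)
    (hu : l.head? = some u) (hu₁ : u ∈ V₁ \ V₂) (ht : l.getLast? = some t) (ht₃ : t ∈ V₃) :
    ∃ (b c : V) (L₁ L₂ L₃ : List V), b ∈ V₁ ∩ V₂ ∧ c ∈ V₂ ∩ V₃ ∧
      L₁.Sublist l ∧ L₁.IsChain E₁ ∧ L₁.head? = l.head? ∧ L₁.getLast? = some b ∧
      L₂.Sublist l ∧ L₂.IsChain E₂ ∧ L₂.head? = some b ∧ L₂.getLast? = some c ∧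
      L₃.Sublist l ∧ L₃.IsChain E₃ ∧ L₃.head? = some c ∧ L₃.getLast? = l.getLast? := by
  have hstep₁ : ∀ a ∈ V₁ \ V₂, ∀ b, (E₁ a b ∨ E₂ a b ∨ E₃ a b) →
      E₁ a b ∧ (b ∈ V₁ \ V₂ ∨ b ∈ V₁ ∩ V₂) := by
    rintro a ⟨ha₁, ha₂⟩ b (h | h | h)
    · have hb₁ := (hE₁ a b h).2
      exact ⟨h, (em (b ∈ V₂)).symm.imp (⟨hb₁, ·⟩) (⟨hb₁, ·⟩)⟩
    · exact absurd (hE₂ a b h).1 ha₂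
    · exact absurd (hE₃ a b h).1 (h13.notMem_of_mem_left ha₁)
  obtain ⟨A, b, C, rfl, hA, hb⟩ :=
    hl.exists_split_of_exit hstep₁ hu hu₁ ht fun h => h13.notMem_of_mem_left h.1 ht₃
  rw [List.getLast?_append_cons] at ht ⊢
  obtain ⟨c, L₂, L₃, hc, hsub₂, hL₂, hhead₂, hlast₂, hsub₃, hL₃, hhead₃, hlast₃⟩ :=
    exists_split₂₃ hE₁ hE₂ hE₃ h13 hB₁out hB₂out hl.right_of_append rfl
      ⟨hb.2, h13.notMem_of_mem_left hb.1⟩ ht ht₃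
  have hsuffix : (b :: C).Sublist (A ++ b :: C) := List.sublist_append_right A _
  exact ⟨b, c, A ++ [b], L₂, L₃, hb, hc, by simp, hA, by simp [List.head?_append],
    List.getLast?_concat, hsub₂.trans hsuffix, hL₂, hhead₂, hlast₂,
    hsub₃.trans hsuffix, hL₃, hhead₃, hlast₃⟩

end SeriesComposition

open SeriesComposition in
theorem stmt_13_general {V : Type*} (V₁ V₂ V₃ : Set V) (E₁ E₂ E₃ : V → V → Prop)
    (hE₁ : ∀ a b, E₁ a b → a ∈ V₁ ∧ b ∈ V₁)
    (hE₂ : ∀ a b, E₂ a b → a ∈ V₂ ∧ b ∈ V₂)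
    (hE₃ : ∀ a b, E₃ a b → a ∈ V₃ ∧ b ∈ V₃)
    (h13 : V₁ ∩ V₃ = ∅)
    (hB₁out : ∀ w ∈ V₁ ∩ V₂, ∀ x, ¬ E₁ w x)
    (hB₂out : ∀ w ∈ V₂ ∩ V₃, ∀ x, ¬ E₂ w x)
    (p : ℕ) (S T : Set V) (hS : S ⊆ V₁ \ V₂) (hT : T ⊆ V₃ \ V₂)
    (P : Fin p → List V)
    (hL : IsLinking (fun a b => E₁ a b ∨ E₂ a b ∨ E₃ a b) S T p P) :
    ∃ (b₁ b₂ : Fin p → V) (P₁ P₂ P₃ : Fin p → List V),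
      (∀ i, b₁ i ∈ V₁ ∩ V₂) ∧ (∀ i, b₂ i ∈ V₂ ∩ V₃) ∧
      IsLinking E₁ S (Set.range b₁) p P₁ ∧
      (∀ i, (P₁ i).getLast? = some (b₁ i)) ∧
      IsLinking E₂ (Set.range b₁) (Set.range b₂) p P₂ ∧
      (∀ i, (P₂ i).head? = some (b₁ i)) ∧
      (∀ i, (P₂ i).getLast? = some (b₂ i)) ∧
      IsLinking E₃ (Set.range b₂) T p P₃ ∧
      (∀ i, (P₃ i).head? = some (b₂ i)) := by
  choose a haS ha using fun i => (hL.1 i).2.2.2.1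
  choose t htT ht using fun i => (hL.1 i).2.2.2.2
  choose b c L₁ L₂ L₃ hb hc hsub₁ hL₁ hhead₁ hlast₁ hsub₂ hL₂ hhead₂ hlast₂
    hsub₃ hL₃ hhead₃ hlast₃ using fun i =>
    exists_split₁₂₃ hE₁ hE₂ hE₃ (Set.disjoint_iff_inter_eq_empty.mpr h13) hB₁out hB₂out
      (hL.1 i).2.1 (ha i) (hS (haS i)) (ht i) (hT (htT i)).1
  exact ⟨b, c, L₁, L₂, L₃, hb, hc,
    hL.of_sublist hsub₁ hL₁ (fun i => ⟨a i, haS i, (hhead₁ i).trans (ha i)⟩)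
      (fun i => ⟨b i, ⟨i, rfl⟩, hlast₁ i⟩), hlast₁,
    hL.of_sublist hsub₂ hL₂ (fun i => ⟨b i, ⟨i, rfl⟩, hhead₂ i⟩)
      (fun i => ⟨c i, ⟨i, rfl⟩, hlast₂ i⟩), hhead₂, hlast₂,
    hL.of_sublist hsub₃ hL₃ (fun i => ⟨c i, ⟨i, rfl⟩, hhead₃ i⟩)
      (fun i => ⟨t i, htT i, (hlast₃ i).trans (ht i)⟩), hhead₃⟩

/-- in the series composition of `G₁`, `G₂`, `G₃` through bridge sets
`B₁ = V₁ ∩ V₂`, `B₂ = V₂ ∩ V₃`, any `p`-linking from `S ⊆ V₁ \ B₁` to `T ⊆ V₃ \ B₂`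
in the composite graph decomposes into a `p`-linking from `S` to bridge vertices
`b₁ i ∈ B₁` in `G₁`, a matching `p`-linking from the `b₁ i` to bridge vertices
`b₂ i ∈ B₂` in `G₂`, and a matching `p`-linking from the `b₂ i` to `T` in `G₃`. -/
theorem stmt_13 {V : Type*} (V₁ V₂ V₃ : Set V) (E₁ E₂ E₃ : V → V → Prop)
    (hE₁ : ∀ a b, E₁ a b → a ∈ V₁ ∧ b ∈ V₁)
    (hE₂ : ∀ a b, E₂ a b → a ∈ V₂ ∧ b ∈ V₂)
    (hE₃ : ∀ a b, E₃ a b → a ∈ V₃ ∧ b ∈ V₃)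
    (h13 : V₁ ∩ V₃ = ∅)
    (hB₁out : ∀ w ∈ V₁ ∩ V₂, ∀ x, ¬ E₁ w x)
    (hB₁in : ∀ w ∈ V₁ ∩ V₂, ∀ x, ¬ E₂ x w)
    (hB₂out : ∀ w ∈ V₂ ∩ V₃, ∀ x, ¬ E₂ w x)
    (hB₂in : ∀ w ∈ V₂ ∩ V₃, ∀ x, ¬ E₃ x w)
    (p : ℕ) (S T : Set V) (hS : S ⊆ V₁ \ V₂) (hT : T ⊆ V₃ \ V₂)
    (P : Fin p → List V)
    (hL : IsLinking (fun a b => E₁ a b ∨ E₂ a b ∨ E₃ a b) S T p P) :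
    ∃ (b₁ b₂ : Fin p → V) (P₁ P₂ P₃ : Fin p → List V),
      (∀ i, b₁ i ∈ V₁ ∩ V₂) ∧ (∀ i, b₂ i ∈ V₂ ∩ V₃) ∧
      IsLinking E₁ S (Set.range b₁) p P₁ ∧
      (∀ i, (P₁ i).getLast? = some (b₁ i)) ∧
      IsLinking E₂ (Set.range b₁) (Set.range b₂) p P₂ ∧
      (∀ i, (P₂ i).head? = some (b₁ i)) ∧
      (∀ i, (P₂ i).getLast? = some (b₂ i)) ∧
      IsLinking E₃ (Set.range b₂) T p P₃ ∧
      (∀ i, (P₃ i).head? = some (b₂ i)) :=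
  stmt_13_general V₁ V₂ V₃ E₁ E₂ E₃ hE₁ hE₂ hE₃ h13 hB₁out hB₂out p S T hS hT P hL
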